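/- arXiv:1309.7094 — 2 statements merged into one kernel-verified Lean document; each statement's English description precedes it below -/
import Mathlib

section
/- Let q, t ∈ ℂ^× and N ≥ 1. For every function f : (ℂ^×)^N → ℂ and every point x = (x_1,…,x_N) ∈ (ℂ^×)^N such that q^a x_i ≠ q^b x_j for all i ≠ j and all a, b ∈ {−1,0,1}, the Macdonald operators H_N(q,t) and H_N(q^{-1},t^{-1}) commute: (H_N(q,t)(H_N(q^{-1},t^{-1})f))(x) = (H_N(q^{-1},t^{-1})(H_N(q,t)f))(x). -/
/-!
Expanding both sides, the terms in which two different variables are shifted match factor by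
factor, so only the coefficients of `f x` have to be compared. Put
`P(z) = ∏ⱼ (t z - xⱼ)(t⁻¹ q z - xⱼ)` and `Q(z) = ∏ⱼ (z - xⱼ)(q z - xⱼ)`. They have the same
leading coefficient and the same value at `0`, so Lagrange interpolation of `P - Q` at the `2N`
zeros `xⱼ, q⁻¹ xⱼ` of `Q`, evaluated at `0`, shows that the residues of `P(z) / (z Q(z))` at these
points sum to zero. Up to a common factor, the residues at `xᵢ` and at `q⁻¹ xᵢ` are the two
diagonal coefficients multiplied by `κ` and `-κ`, where `κ = (t - 1)(t⁻¹ q - 1) ∏ⱼ xⱼ² / (1 - q)`.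
For `q = 1`, `t = 1` or `t = q` the identity is immediate.
-/

open scoped BigOperators

/-- The Macdonald operator `H_N(q,t)` acting on functions of `N` complex variables:
`(H_N(q,t)f)(x) = Σ_{i=1}^N ∏_{j≠i} (t x_i − x_j)/(x_i − x_j) · f(x_1,…,q x_i,…,x_N)`. -/
noncomputable def macOp (q t : ℂ) {N : ℕ} (f : (Fin N → ℂ) → ℂ) (x : Fin N → ℂ) : ℂ :=
  ∑ i : Fin N,
    (∏ j ∈ Finset.univ.erase i, (t * x i - x j) / (x i - x j)) *
      f (Function.update x i (q * x i))

open Finset Polynomial Function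

theorem Finset.prod_univ_erase_inl {α β M : Type*} [Fintype α] [Fintype β] [DecidableEq α]
    [DecidableEq β] [CommMonoid M] (f : α ⊕ β → M) (a : α) :
    ∏ l ∈ univ.erase (Sum.inl a), f l =
      (∏ a' ∈ univ.erase a, f (Sum.inl a')) * ∏ b, f (Sum.inr b) := by
  rw [show univ.erase (Sum.inl a) = (univ.erase a).disjSum univ by ext (_ | _) <;> simp,
    prod_disjSum]

theorem Finset.prod_univ_erase_inr {α β M : Type*} [Fintype α] [Fintype β] [DecidableEq α]
    [DecidableEq β] [CommMonoid M] (f : α ⊕ β → M) (b : β) :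
    ∏ l ∈ univ.erase (Sum.inr b), f l =
      (∏ a, f (Sum.inl a)) * ∏ b' ∈ univ.erase b, f (Sum.inr b') := by
  rw [show univ.erase (Sum.inr b) = univ.disjSum (univ.erase b) by ext (_ | _) <;> simp,
    prod_disjSum]

theorem Fintype.sum_sum_eq_sum_sum_of_diag_of_ne {ι M : Type*} [Fintype ι] [DecidableEq ι]
    [AddCommMonoid M] {F G : ι → ι → M} (hdiag : ∑ i, F i i = ∑ i, G i i)
    (hoff : ∀ i k, i ≠ k → F i k = G k i) :
    ∑ i, ∑ k, F i k = ∑ i, ∑ k, G i k := by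
  calc ∑ i, ∑ k, F i k = ∑ i, (F i i + ∑ k ∈ univ.erase i, F i k) :=
        Finset.sum_congr rfl fun i _ => (add_sum_erase _ (F i) (mem_univ i)).symm
    _ = ∑ i, (G i i + ∑ k ∈ univ.erase i, G k i) := by
        rw [sum_add_distrib, sum_add_distrib, hdiag]
        exact congrArg _ <| Finset.sum_congr rfl fun i _ =>
          Finset.sum_congr rfl fun k hk => hoff i k (ne_of_mem_erase hk).symm
    _ = ∑ i, ∑ k, G k i :=
        Finset.sum_congr rfl fun i _ => add_sum_erase _ (G · i) (mem_univ i)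
    _ = ∑ i, ∑ k, G i k := sum_comm

section Interpolation

variable {K ι : Type*} [Field K]

theorem Polynomial.eval_eq_sum_eval_mul_prod_div [DecidableEq ι] {s : Finset ι} {v : ι → K}
    (hvs : Set.InjOn v s) {R : K[X]} (hR : R.degree < #s) (z : K) :
    R.eval z = ∑ i ∈ s, R.eval (v i) * ∏ j ∈ s.erase i, (z - v j) / (v i - v j) := by
  conv_lhs => rw [Lagrange.eq_interpolate hvs hR]
  simp [Lagrange.interpolate_apply, eval_finsetSum, Lagrange.basis, Lagrange.basisDivisor,
    eval_prod, div_eq_inv_mul]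

theorem Polynomial.degree_prod_C_mul_X_sub_C [Fintype ι] {a : ι → K} (b : ι → K)
    (ha : ∀ i, a i ≠ 0) :
    (∏ i, (C (a i) * X - C (b i))).degree = (Fintype.card ι : WithBot ℕ) := by
  simp_rw [degree_prod, sub_eq_add_neg, ← C_neg, degree_linear (ha _)]
  simp

theorem Polynomial.leadingCoeff_prod_C_mul_X_sub_C [Fintype ι] {a : ι → K} (b : ι → K)
    (ha : ∀ i, a i ≠ 0) :
    (∏ i, (C (a i) * X - C (b i))).leadingCoeff = ∏ i, a i := by
  simp_rw [leadingCoeff_prod, sub_eq_add_neg, ← C_neg, leadingCoeff_linear (ha _)]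

theorem Polynomial.degree_prod_C_mul_X_sub_C_sub_lt [Fintype ι] {a a' : ι → K} (b b' : ι → K)
    (ha : ∀ i, a i ≠ 0) (h : ∏ i, a i = ∏ i, a' i) :
    (∏ i, (C (a i) * X - C (b i)) - ∏ i, (C (a' i) * X - C (b' i))).degree <
      (Fintype.card ι : WithBot ℕ) := by
  have ha' : ∀ i, a' i ≠ 0 := fun i =>
    prod_ne_zero_iff.mp (h ▸ prod_ne_zero_iff.mpr fun i _ => ha i) i (mem_univ i)
  rw [← degree_prod_C_mul_X_sub_C b ha]
  refine degree_sub_lt_left ?_ ?_ ?_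
  · rw [degree_prod_C_mul_X_sub_C b ha, degree_prod_C_mul_X_sub_C b' ha']
  · exact ne_zero_of_coe_le_degree (degree_prod_C_mul_X_sub_C b ha).ge
  · rw [leadingCoeff_prod_C_mul_X_sub_C b ha, leadingCoeff_prod_C_mul_X_sub_C b' ha', h]

theorem sum_prod_mul_prod_div_eq_zero [Fintype ι] [DecidableEq ι] {a a' b r : ι → K}
    (hr : Injective r) (ha : ∀ i, a i ≠ 0) (h : ∏ i, a i = ∏ i, a' i)
    (hroot : ∀ i, a' i * r i = b i) :
    ∑ m, (∏ l, (a l * r m - b l)) * ∏ l ∈ univ.erase m, r l / (r l - r m) = 0 := by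
  have hdeg := degree_prod_C_mul_X_sub_C_sub_lt b b ha h
  rw [← card_univ] at hdeg
  have key := eval_eq_sum_eval_mul_prod_div hr.injOn hdeg 0
  have hQ : ∀ m, ∏ l, (a' l * r m - b l) = 0 := fun m =>
    prod_eq_zero (mem_univ m) (by rw [hroot, sub_self])
  simp only [eval_sub, eval_prod, eval_mul, eval_C, eval_X, mul_zero, sub_self, hQ,
    sub_zero] at key
  rw [eq_comm] at key
  convert key using 4 with m _ l _
  rw [zero_sub, ← neg_sub, div_neg, neg_div]

end Interpolation

section MacdonaldCoefficients

variable {K ι : Type*} [Field K] [Fintype ι] [DecidableEq ι]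

def macCoeff (t : K) (x : ι → K) (i : ι) : K :=
  ∏ j ∈ univ.erase i, (t * x i - x j) / (x i - x j)

theorem macCoeff_update_self (t y : K) (x : ι → K) (i : ι) :
    macCoeff t (update x i y) i = ∏ j ∈ univ.erase i, (t * y - x j) / (y - x j) := by
  refine prod_congr rfl fun j hj => ?_
  rw [update_self, update_of_ne (ne_of_mem_erase hj)]

theorem macCoeff_eq_mul_prod_erase (t : K) (x : ι → K) {i k : ι} (hki : k ≠ i) :
    macCoeff t x i = (t * x i - x k) / (x i - x k) *
      ∏ j ∈ (univ.erase i).erase k, (t * x i - x j) / (x i - x j) :=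
  (mul_prod_erase _ _ (mem_erase.2 ⟨hki, mem_univ k⟩)).symm

theorem macCoeff_update_of_ne (t y : K) (x : ι → K) {i k : ι} (hki : k ≠ i) :
    macCoeff t (update x k y) i = (t * x i - y) / (x i - y) *
      ∏ j ∈ (univ.erase i).erase k, (t * x i - x j) / (x i - x j) := by
  rw [macCoeff_eq_mul_prod_erase t _ hki, update_self, update_of_ne hki.symm]
  congr 1
  exact prod_congr rfl fun j hj => by rw [update_of_ne (ne_of_mem_erase hj)]

theorem macCoeff_mul_macCoeff_update_comm {q t : K} (hq : q ≠ 0) (ht : t ≠ 0) {x : ι → K}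
    {i k : ι} (hik : i ≠ k) (hx : x i ≠ x k) (hqx : q * x i ≠ x k) :
    macCoeff t x i * macCoeff t⁻¹ (update x i (q * x i)) k =
      macCoeff t⁻¹ x k * macCoeff t (update x k (q⁻¹ * x k)) i := by
  rw [macCoeff_eq_mul_prod_erase t x hik.symm, macCoeff_update_of_ne _ _ _ hik,
    macCoeff_eq_mul_prod_erase t⁻¹ x hik, macCoeff_update_of_ne _ _ _ hik.symm]
  have h₁ : x i - x k ≠ 0 := sub_ne_zero.2 hx
  have h₂ : q * x i - x k ≠ 0 := sub_ne_zero.2 hqx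
  have cross : (t * x i - x k) / (x i - x k) * ((t⁻¹ * x k - q * x i) / (x k - q * x i)) =
      (t⁻¹ * x k - x i) / (x k - x i) * ((t * x i - q⁻¹ * x k) / (x i - q⁻¹ * x k)) := by
    rw [show x i - q⁻¹ * x k = q⁻¹ * (q * x i - x k) by field_simp,
      show x k - q * x i = -(q * x i - x k) by ring, show x k - x i = -(x i - x k) by ring]
    field_simp
    ring
  linear_combination (∏ j ∈ (univ.erase i).erase k, (t * x i - x j) / (x i - x j)) *
    (∏ j ∈ (univ.erase k).erase i, (t⁻¹ * x k - x j) / (x k - x j)) * cross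

theorem macCoeff_mul_macCoeff_update_self_eq_one {q t : K} (ht : t ≠ 0) (hdeg : t = 1 ∨ t = q)
    {x : ι → K} {i : ι} (hx : ∀ j ≠ i, x i ≠ x j) (hqx : ∀ j ≠ i, q * x i ≠ x j) :
    macCoeff t x i * macCoeff t⁻¹ (update x i (q * x i)) i = 1 := by
  rw [macCoeff_update_self, macCoeff, ← prod_mul_distrib]
  refine prod_eq_one fun j hj => ?_
  have h₁ := sub_ne_zero.2 (hx j (ne_of_mem_erase hj))
  have h₂ := sub_ne_zero.2 (hqx j (ne_of_mem_erase hj))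
  rcases hdeg with rfl | rfl
  · simp [h₁, h₂]
  · rw [inv_mul_cancel_left₀ ht, div_mul_div_comm, mul_comm, div_self (mul_ne_zero h₁ h₂)]

theorem prod_mul_prod_div_eq_mul_macCoeff_mul_macCoeff {p s : K} (hs : s ≠ 0) (hp : p ≠ 1)
    {x : ι → K} {i : ι} (hx0 : x i ≠ 0) (hx : ∀ j ≠ i, x i ≠ x j)
    (hpx : ∀ j ≠ i, p * x i ≠ x j) :
    (∏ j, (s * x i - x j)) * (∏ j, (s⁻¹ * (p * x i) - x j)) *
        ((∏ j ∈ univ.erase i, x j / (x j - x i)) * ∏ j, x j / (x j - p * x i)) =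
      (s - 1) * (s⁻¹ * p - 1) / (1 - p) * (∏ j, x j ^ 2) *
        (macCoeff s x i * macCoeff s⁻¹ (update x i (p * x i)) i) := by
  have hself : (s * x i - x i) * (s⁻¹ * (p * x i) - x i) * (x i / (x i - p * x i)) =
      (s - 1) * (s⁻¹ * p - 1) / (1 - p) * x i ^ 2 := by
    have : 1 - p ≠ 0 := sub_ne_zero.2 hp.symm
    rw [show x i - p * x i = (1 - p) * x i by ring]
    field_simp
  have hfac : ∀ j ∈ univ.erase i,
      (s * x i - x j) * (s⁻¹ * (p * x i) - x j) * (x j / (x j - x i) * (x j / (x j - p * x i))) =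
        x j ^ 2 * ((s * x i - x j) / (x i - x j) * ((s⁻¹ * (p * x i) - x j) / (p * x i - x j))) := by
    intro j hj
    have h₁ := sub_ne_zero.2 (hx j (ne_of_mem_erase hj))
    have h₂ := sub_ne_zero.2 (hpx j (ne_of_mem_erase hj))
    rw [show x j - x i = -(x i - x j) by ring, show x j - p * x i = -(p * x i - x j) by ring]
    field_simp
  rw [macCoeff_update_self, macCoeff, ← mul_prod_erase univ (fun j => s * x i - x j) (mem_univ i),
    ← mul_prod_erase univ (fun j => s⁻¹ * (p * x i) - x j) (mem_univ i),
    ← mul_prod_erase univ (fun j => x j / (x j - p * x i)) (mem_univ i),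
    ← mul_prod_erase univ (fun j => x j ^ 2) (mem_univ i)]
  calc _ = (s * x i - x i) * (s⁻¹ * (p * x i) - x i) * (x i / (x i - p * x i)) *
        ∏ j ∈ univ.erase i,
          (s * x i - x j) * (s⁻¹ * (p * x i) - x j) *
            (x j / (x j - x i) * (x j / (x j - p * x i))) := by
        simp only [prod_mul_distrib]
        ring
    _ = _ := by
        rw [prod_congr rfl hfac, hself]
        simp only [prod_mul_distrib]
        ring

theorem sum_prod_mul_prod_div_add_sum_prod_mul_prod_div_eq_zero {q t : K} (hq : q ≠ 0)
    (hq1 : q ≠ 1) (ht : t ≠ 0) {x : ι → K} (hx0 : ∀ i, x i ≠ 0) (hx : Injective x)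
    (hqx' : ∀ i j, i ≠ j → q⁻¹ * x i ≠ x j) :
    ∑ i, (∏ j, (t * x i - x j)) * (∏ j, (t⁻¹ * (q * x i) - x j)) *
        ((∏ j ∈ univ.erase i, x j / (x j - x i)) * ∏ j, x j / (x j - q * x i)) +
      ∑ k, (∏ j, (t⁻¹ * x k - x j)) * (∏ j, (t * (q⁻¹ * x k) - x j)) *
        ((∏ j ∈ univ.erase k, x j / (x j - x k)) * ∏ j, x j / (x j - q⁻¹ * x k)) = 0 := by
  have hr : Injective (Sum.elim x fun j => q⁻¹ * x j) :=
    hx.sumElim (fun i j h => hx (mul_left_cancel₀ (inv_ne_zero hq) h)) fun i j h => by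
      rcases eq_or_ne j i with rfl | hji
      · exact hq1 (mul_right_cancel₀ (hx0 j)
          (by nth_rw 1 [h]; rw [mul_inv_cancel_left₀ hq, one_mul]))
      · exact hqx' j i hji h.symm
  have hres := sum_prod_mul_prod_div_eq_zero hr (a := Sum.elim (fun _ => t) fun _ => t⁻¹ * q)
    (a' := Sum.elim (fun _ => 1) fun _ => q) (b := Sum.elim x x)
    (by rintro (_ | _) <;> simp [ht, hq])
    (by simp [Fintype.prod_sum_type, mul_pow]; field_simp)
    (by rintro (_ | _) <;> simp [hq])
  have hscale : ∀ u v : K, q⁻¹ * u / (q⁻¹ * u - v) = u / (u - q * v) := fun u v => by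
    rw [show q⁻¹ * u - v = q⁻¹ * (u - q * v) by field_simp, mul_div_mul_left _ _ (inv_ne_zero hq)]
  simp only [Fintype.sum_sum_type, Fintype.prod_sum_type, prod_univ_erase_inl,
    prod_univ_erase_inr, Sum.elim_inl, Sum.elim_inr, hscale, mul_assoc,
    mul_inv_cancel_left₀ hq] at hres
  rw [← hres]
  congr 1 <;> exact Finset.sum_congr rfl fun _ _ => by ring

theorem sum_macCoeff_mul_macCoeff_update_self_of_ne {q t : K} (hq : q ≠ 0) (hq1 : q ≠ 1)
    (ht : t ≠ 0) (ht1 : t ≠ 1) (htq : t ≠ q) {x : ι → K} (hx0 : ∀ i, x i ≠ 0)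
    (hx : Injective x) (hqx : ∀ i j, i ≠ j → q * x i ≠ x j)
    (hqx' : ∀ i j, i ≠ j → q⁻¹ * x i ≠ x j) :
    ∑ i, macCoeff t x i * macCoeff t⁻¹ (update x i (q * x i)) i =
      ∑ i, macCoeff t⁻¹ x i * macCoeff t (update x i (q⁻¹ * x i)) i := by
  have hx' : ∀ i, ∀ j ≠ i, x i ≠ x j := fun i j hji h => hji (hx h).symm
  have hres := sum_prod_mul_prod_div_add_sum_prod_mul_prod_div_eq_zero hq hq1 ht hx0 hx hqx'
  have hinl := fun i => prod_mul_prod_div_eq_mul_macCoeff_mul_macCoeff ht hq1 (hx0 i) (hx' i)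
    fun j hj => hqx i j hj.symm
  have hinr := fun k => prod_mul_prod_div_eq_mul_macCoeff_mul_macCoeff (inv_ne_zero ht)
    (inv_ne_one.2 hq1) (hx0 k) (hx' k) fun j hj => hqx' k j hj.symm
  simp only [inv_inv] at hinr
  simp only [hinl, hinr, ← mul_sum] at hres
  have hκ : (t⁻¹ - 1) * (t * q⁻¹ - 1) / (1 - q⁻¹) = -((t - 1) * (t⁻¹ * q - 1) / (1 - q)) := by
    rw [show 1 - q⁻¹ = -(q⁻¹ * (1 - q)) by field_simp; ring]
    field_simp
    ring
  have hκ0 : (t - 1) * (t⁻¹ * q - 1) / (1 - q) * ∏ j, x j ^ 2 ≠ 0 := by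
    refine mul_ne_zero (div_ne_zero (mul_ne_zero (sub_ne_zero.2 ht1) ?_)
      (sub_ne_zero.2 hq1.symm)) (prod_ne_zero_iff.2 fun j _ => pow_ne_zero _ (hx0 j))
    rwa [sub_ne_zero, ne_eq, inv_mul_eq_one₀ ht]
  rw [hκ] at hres
  refine sub_eq_zero.1 ((mul_eq_zero.1 ?_).resolve_left hκ0)
  linear_combination hres

theorem sum_macCoeff_mul_macCoeff_update_self {q t : K} (hq : q ≠ 0) (ht : t ≠ 0) {x : ι → K}
    (hx0 : ∀ i, x i ≠ 0) (hx : Injective x) (hqx : ∀ i j, i ≠ j → q * x i ≠ x j) :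
    ∑ i, macCoeff t x i * macCoeff t⁻¹ (update x i (q * x i)) i =
      ∑ i, macCoeff t⁻¹ x i * macCoeff t (update x i (q⁻¹ * x i)) i := by
  have hqx' : ∀ i j, i ≠ j → q⁻¹ * x i ≠ x j := fun i j hij h =>
    hqx j i hij.symm (by rw [← h, mul_inv_cancel_left₀ hq])
  rcases eq_or_ne q 1 with rfl | hq1
  · simp [mul_comm]
  by_cases hdeg : t = 1 ∨ t = q
  · have hdeg' : t⁻¹ = 1 ∨ t⁻¹ = q⁻¹ := by simpa using hdeg
    have hx' : ∀ i, ∀ j ≠ i, x i ≠ x j := fun i j hji h => hji (hx h).symm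
    have h₁ := fun i => macCoeff_mul_macCoeff_update_self_eq_one ht hdeg (hx' i)
      fun j hj => hqx i j hj.symm
    have h₂ := fun i => macCoeff_mul_macCoeff_update_self_eq_one (inv_ne_zero ht) hdeg' (hx' i)
      fun j hj => hqx' i j hj.symm
    simp only [inv_inv] at h₂
    simp only [h₁, h₂]
  push Not at hdeg
  exact sum_macCoeff_mul_macCoeff_update_self_of_ne hq hq1 ht hdeg.1 hdeg.2 hx0 hx hqx hqx'

end MacdonaldCoefficients

theorem macOp_macOp (q t q' t' : ℂ) {N : ℕ} (f : (Fin N → ℂ) → ℂ) (x : Fin N → ℂ) :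
    macOp q t (macOp q' t' f) x = ∑ i, ∑ k, macCoeff t x i * macCoeff t' (update x i (q * x i)) k *
      f (update (update x i (q * x i)) k (q' * update x i (q * x i) k)) := by
  simp only [macOp, macCoeff, mul_sum, mul_assoc]

theorem macOp_commute_general (q t : ℂ) (hq : q ≠ 0) (ht : t ≠ 0) (N : ℕ)
    (f : (Fin N → ℂ) → ℂ) (x : Fin N → ℂ) (hx0 : ∀ i, x i ≠ 0)
    (hsep : ∀ i j, i ≠ j → ∀ a b : ℤ, a ∈ ({-1, 0, 1} : Set ℤ) → b ∈ ({-1, 0, 1} : Set ℤ) →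
      q ^ a * x i ≠ q ^ b * x j) :
    macOp q t (macOp q⁻¹ t⁻¹ f) x = macOp q⁻¹ t⁻¹ (macOp q t f) x := by
  have hx : Injective x := fun i j h => by_contra fun hij =>
    hsep i j hij 0 0 (by simp) (by simp) (by simpa using h)
  have hqx : ∀ i j, i ≠ j → q * x i ≠ x j := fun i j hij => by
    simpa using hsep i j hij 1 0 (by simp) (by simp)
  rw [macOp_macOp, macOp_macOp]
  refine Fintype.sum_sum_eq_sum_sum_of_diag_of_ne ?_ fun i k hik => ?_
  · simp only [update_self, update_idem, inv_mul_cancel_left₀ hq, mul_inv_cancel_left₀ hq,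
      update_eq_self, ← sum_mul]
    rw [sum_macCoeff_mul_macCoeff_update_self hq ht hx0 hx hqx]
  · rw [update_of_ne hik.symm, update_of_ne hik, update_comm hik,
      macCoeff_mul_macCoeff_update_comm hq ht hik (hx.ne hik) (hqx i k hik)]

/-- The Macdonald operators `H_N(q,t)` and `H_N(q⁻¹,t⁻¹)` commute: for every function `f`
and every point `x` with nonzero coordinates satisfying `q^a x_i ≠ q^b x_j` for all `i ≠ j`
and `a, b ∈ {−1,0,1}`, we have `H_N(q,t) H_N(q⁻¹,t⁻¹) f (x) = H_N(q⁻¹,t⁻¹) H_N(q,t) f (x)`. -/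
theorem macOp_commute (q t : ℂ) (hq : q ≠ 0) (ht : t ≠ 0) (N : ℕ) (hN : 1 ≤ N)
    (f : (Fin N → ℂ) → ℂ) (x : Fin N → ℂ) (hx0 : ∀ i, x i ≠ 0)
    (hsep : ∀ i j, i ≠ j → ∀ a b : ℤ, a ∈ ({-1, 0, 1} : Set ℤ) → b ∈ ({-1, 0, 1} : Set ℤ) →
      q ^ a * x i ≠ q ^ b * x j) :
    macOp q t (macOp q⁻¹ t⁻¹ f) x = macOp q⁻¹ t⁻¹ (macOp q t f) x :=
  macOp_commute_general q t hq ht N f x hx0 hsep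
end

section
/- Let p ∈ ℂ with 0 < |p| < 1, q, t ∈ ℂ^×, and let f be any function of m complex variables and g any function of n complex variables. Then (f ∗′ g)(x_1,…,x_{m+n}) = (g ∗ f)(x_1,…,x_{m+n}) at every point where both symmetrized expressions are defined, where ∗ is the star product built from ω_p(x,y) := Θ_p(q^{-1}y/x)Θ_p(ty/x)Θ_p(qt^{-1}y/x)/Θ_p(y/x)^3 and ∗′ is the star product built from ω′_p(x,y) := Θ_p(qy/x)Θ_p(t^{-1}y/x)Θ_p(q^{-1}ty/x)/Θ_p(y/x)^3. -/
open scoped BigOperators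

/-- The infinite product `(x;p)_∞ = ∏_{n ≥ 0} (1 - x pⁿ)`. -/
noncomputable def qPoch (p x : ℂ) : ℂ := ∏' n : ℕ, (1 - x * p ^ n)

/-- The theta function `Θ_p(x) = (p;p)_∞ (x;p)_∞ (p x⁻¹;p)_∞`. -/
noncomputable def theta (p x : ℂ) : ℂ := qPoch p p * qPoch p x * qPoch p (p * x⁻¹)

/-- The multiplicative lattice `p^ℤ = {p^k : k ∈ ℤ}`. -/
def pPowZ (p : ℂ) : Set ℂ := Set.range fun k : ℤ => p ^ k

/-- The star product `(f ∗_w g)(x₁,…,x_{m+n}) = Sym[f(x₁,…,x_m) g(x_{m+1},…,x_{m+n})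
∏_{1≤α≤m, m+1≤β≤m+n} w(x_α,x_β)]`. -/
noncomputable def starProd (w : ℂ → ℂ → ℂ) {m n : ℕ}
    (f : (Fin m → ℂ) → ℂ) (g : (Fin n → ℂ) → ℂ) (x : Fin (m + n) → ℂ) : ℂ :=
  (1 / (Nat.factorial (m + n) : ℂ)) *
    ∑ σ : Equiv.Perm (Fin (m + n)),
      f (fun i => x (σ (Fin.castAdd n i))) * g (fun j => x (σ (Fin.natAdd m j))) *
        ∏ i : Fin m, ∏ j : Fin n, w (x (σ (Fin.castAdd n i))) (x (σ (Fin.natAdd m j)))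

/-- `ω_p(x,y) = Θ_p(q⁻¹y/x)Θ_p(ty/x)Θ_p(qt⁻¹y/x)/Θ_p(y/x)³`. -/
noncomputable def omegaEll (q t p x y : ℂ) : ℂ :=
  theta p (q⁻¹ * y / x) * theta p (t * y / x) * theta p (q * t⁻¹ * y / x) /
    (theta p (y / x)) ^ 3

/-- `ω′_p(x,y) = Θ_p(qy/x)Θ_p(t⁻¹y/x)Θ_p(q⁻¹ty/x)/Θ_p(y/x)³`. -/
noncomputable def omegaEll' (q t p x y : ℂ) : ℂ :=
  theta p (q * y / x) * theta p (t⁻¹ * y / x) * theta p (q⁻¹ * t * y / x) /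
    (theta p (y / x)) ^ 3

/-
`(x;p)_∞ = (1 - x)(px;p)_∞` gives the inversion law `Θ_p(x⁻¹) = -x⁻¹ Θ_p(x)`.
Applying it to the four theta factors of `ω′_p(x, y)` shows `ω′_p(x, y) = ω_p(y, x)`: the prefactors
`-(qy/x)⁻¹ · -(t⁻¹y/x)⁻¹ · -(q⁻¹ty/x)⁻¹ = (-(y/x)⁻¹)³` cancel against the denominator. Precomposing
the permutations in `f ∗′ g` with the block swap `Fin (m + n) ≃ Fin (n + m)` then turns it term by
term into `g ∗ f`.
-/

lemma multipliable_one_sub_mul_pow (x : ℂ) {p : ℂ} (hp : ‖p‖ < 1) :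
    Multipliable fun n : ℕ => 1 - x * p ^ n := by
  simpa [sub_eq_add_neg] using multipliable_one_add_of_summable (f := fun n : ℕ => -(x * p ^ n))
    (by simpa using (summable_geometric_of_lt_one (norm_nonneg p) hp).mul_left ‖x‖)

lemma qPoch_eq_one_sub_mul_qPoch_mul (x : ℂ) {p : ℂ} (hp : ‖p‖ < 1) :
    qPoch p x = (1 - x) * qPoch p (p * x) := by
  have hshift : (fun n : ℕ => 1 - x * p ^ (n + 1)) = fun n : ℕ => 1 - p * x * p ^ n := by
    funext n; ring
  rw [qPoch, tprod_eq_zero_mul' (hshift ▸ multipliable_one_sub_mul_pow (p * x) hp), hshift,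
    pow_zero, mul_one, qPoch]

lemma theta_inv {p : ℂ} (hp : ‖p‖ < 1) {x : ℂ} (hx : x ≠ 0) :
    theta p x⁻¹ = -x⁻¹ * theta p x := by
  rw [theta, theta, inv_inv, qPoch_eq_one_sub_mul_qPoch_mul x⁻¹ hp,
    qPoch_eq_one_sub_mul_qPoch_mul x hp]
  have h : (1 : ℂ) - x⁻¹ = -x⁻¹ * (1 - x) := by field_simp; ring
  rw [h]; ring

lemma omegaEll'_eq_omegaEll_swap {p : ℂ} (hp : ‖p‖ < 1) {q t x y : ℂ}
    (hq : q ≠ 0) (ht : t ≠ 0) (hx : x ≠ 0) (hy : y ≠ 0) :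
    omegaEll' q t p x y = omegaEll q t p y x := by
  have hyx : y / x ≠ 0 := div_ne_zero hy hx
  rw [omegaEll, omegaEll', ← inv_div y x,
    show q⁻¹ * x / y = (q * y / x)⁻¹ by field_simp,
    show t * x / y = (t⁻¹ * y / x)⁻¹ by field_simp,
    show q * t⁻¹ * x / y = (q⁻¹ * t * y / x)⁻¹ by field_simp,
    theta_inv hp (by positivity : q * y / x ≠ 0), theta_inv hp (by positivity : t⁻¹ * y / x ≠ 0),
    theta_inv hp (by positivity : q⁻¹ * t * y / x ≠ 0), theta_inv hp hyx]
  have hprefactor : -(q * y / x)⁻¹ * -(t⁻¹ * y / x)⁻¹ * -(q⁻¹ * t * y / x)⁻¹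
      = (-(y / x)⁻¹) ^ 3 := by
    field_simp
  rw [mul_pow, ← mul_div_mul_left _ _ (pow_ne_zero 3 (neg_ne_zero.mpr (inv_ne_zero hyx))),
    ← hprefactor]
  ring

lemma starProd_eq_swap_of_eq_swap {w w' : ℂ → ℂ → ℂ} {m n : ℕ}
    (f : (Fin m → ℂ) → ℂ) (g : (Fin n → ℂ) → ℂ) (x : Fin (m + n) → ℂ)
    (hw : ∀ i j, w' (x i) (x j) = w (x j) (x i)) :
    starProd w' f g x = starProd w g f (fun i => x (Fin.cast (Nat.add_comm n m) i)) := by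
  rw [starProd, starProd]
  congr 1
  · rw [Nat.add_comm]
  refine Fintype.sum_equiv (Equiv.equivCongr finAddFlip.symm (finCongr (Nat.add_comm m n))) _ _
    fun σ => ?_
  simp only [Equiv.equivCongr_apply_apply, Equiv.symm_symm, finAddFlip_apply_castAdd,
    finAddFlip_apply_natAdd, finCongr_apply, Fin.cast_cast, Fin.cast_eq_self, hw]
  rw [mul_comm (f _) (g _), Finset.prod_comm]

theorem starProd_prime_eq_swap_elliptic_general (p : ℂ) (hp1 : ‖p‖ < 1)
    (q t : ℂ) (hq : q ≠ 0) (ht : t ≠ 0) (m n : ℕ)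
    (f : (Fin m → ℂ) → ℂ) (g : (Fin n → ℂ) → ℂ) (x : Fin (m + n) → ℂ)
    (hx0 : ∀ i, x i ≠ 0) :
    starProd (omegaEll' q t p) f g x =
      starProd (omegaEll q t p) g f (fun i => x (Fin.cast (Nat.add_comm n m) i)) :=
  starProd_eq_swap_of_eq_swap f g x fun i j =>
    omegaEll'_eq_omegaEll_swap hp1 hq ht (hx0 i) (hx0 j)

/-- For the elliptic Feigin–Odesskii star products built from `ω_p` and `ω′_p`:
`(f ∗′ g)(x₁,…,x_{m+n}) = (g ∗ f)(x₁,…,x_{m+n})` at every point where both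
symmetrized expressions are defined. -/
theorem starProd_prime_eq_swap_elliptic (p : ℂ) (hp0 : p ≠ 0) (hp1 : ‖p‖ < 1)
    (q t : ℂ) (hq : q ≠ 0) (ht : t ≠ 0) (m n : ℕ)
    (f : (Fin m → ℂ) → ℂ) (g : (Fin n → ℂ) → ℂ) (x : Fin (m + n) → ℂ)
    (hx0 : ∀ i, x i ≠ 0) (hxd : ∀ i j, i ≠ j → x i / x j ∉ pPowZ p) :
    starProd (omegaEll' q t p) f g x =
      starProd (omegaEll q t p) g f (fun i => x (Fin.cast (Nat.add_comm n m) i)) :=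
  starProd_prime_eq_swap_elliptic_general p hp1 q t hq ht m n f g x hx0
end
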